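/- Let S1 and S2 be p×p real symmetric positive semidefinite matrices and define the symmetric loss L2(Δ) = (1/4) tr(Δᵀ S1 Δ S2) + (1/4) tr(Δᵀ S2 Δ S1) − tr(Δ (S1 − S2)). Then L2 is a smooth convex function of the p×p real matrix Δ, and its gradient ∇L2(Δ) = (1/2) S1 Δ S2 + (1/2) S2 Δ S1 − (S1 − S2) is Lipschitz continuous with Lipschitz constant λmax(S1) λmax(S2) with respect to the Frobenius norm: ‖∇L2(Δ1) − ∇L2(Δ2)‖₂ ≤ λmax(S1) λmax(S2) ‖Δ1 − Δ2‖₂ for all p×p real matrices Δ1, Δ2. -/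

import Mathlib

open Matrix

attribute [local instance] Matrix.frobeniusNormedAddCommGroup Matrix.frobeniusNormedSpace

/-- The Frobenius norm `‖A‖₂ = √tr(A Aᵀ)` of a real matrix. -/
noncomputable def frobNorm {p : ℕ} (A : Matrix (Fin p) (Fin p) ℝ) : ℝ :=
  Real.sqrt (A * Aᵀ).trace

/-- The largest eigenvalue of a symmetric real matrix. -/
noncomputable def lamMax {p : ℕ} [NeZero p] {S : Matrix (Fin p) (Fin p) ℝ}
    (hS : S.IsHermitian) : ℝ :=
  ⨆ i, hS.eigenvalues i

section Aux

attribute [local instance] Matrix.frobeniusNormedRing Matrix.frobeniusNormedAlgebra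

lemma aux_contDiff {p : ℕ} (S1 S2 : Matrix (Fin p) (Fin p) ℝ) :
    ContDiff ℝ (⊤ : ℕ∞) (fun Δ : Matrix (Fin p) (Fin p) ℝ =>
        (1 / 4) * (Δᵀ * S1 * Δ * S2).trace + (1 / 4) * (Δᵀ * S2 * Δ * S1).trace
          - (Δ * (S1 - S2)).trace) := by
  have htr : ContDiff ℝ (⊤ : ℕ∞) (fun M : Matrix (Fin p) (Fin p) ℝ => M.trace) :=
    (Matrix.traceLinearMap (Fin p) ℝ ℝ).toContinuousLinearMap.contDiff
  have hT : ContDiff ℝ (⊤ : ℕ∞) (fun Δ : Matrix (Fin p) (Fin p) ℝ => Δᵀ) :=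
    (Matrix.transposeLinearEquiv (Fin p) (Fin p) ℝ ℝ).toLinearMap.toContinuousLinearMap.contDiff
  have h1 : ContDiff ℝ (⊤ : ℕ∞) (fun Δ : Matrix (Fin p) (Fin p) ℝ => (Δᵀ * S1 * Δ * S2).trace) :=
    htr.comp (((hT.mul contDiff_const).mul contDiff_id).mul contDiff_const)
  have h2 : ContDiff ℝ (⊤ : ℕ∞) (fun Δ : Matrix (Fin p) (Fin p) ℝ => (Δᵀ * S2 * Δ * S1).trace) :=
    htr.comp (((hT.mul contDiff_const).mul contDiff_id).mul contDiff_const)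
  have h3 : ContDiff ℝ (⊤ : ℕ∞) (fun Δ : Matrix (Fin p) (Fin p) ℝ => (Δ * (S1 - S2)).trace) :=
    htr.comp (contDiff_id.mul contDiff_const)
  exact ((contDiff_const.mul h1).add (contDiff_const.mul h2)).sub h3

end Aux

lemma trace_tmul_nonneg {p q : ℕ} (M : Matrix (Fin p) (Fin q) ℝ) : 0 ≤ (Mᵀ * M).trace := by
  simp only [Matrix.trace, Matrix.diag_apply, Matrix.mul_apply, Matrix.transpose_apply]
  exact Finset.sum_nonneg fun i _ => Finset.sum_nonneg fun j _ => mul_self_nonneg _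

open scoped MatrixOrder in
lemma psd_eq_conjTranspose_mul_self {p : ℕ} {S : Matrix (Fin p) (Fin p) ℝ} (hS : S.PosSemidef) :
    ∃ B : Matrix (Fin p) (Fin p) ℝ, S = Bᴴ * B := by
  obtain ⟨B, hB⟩ := CStarAlgebra.nonneg_iff_eq_star_mul_self.mp hS.nonneg
  exact ⟨B, hB⟩

lemma quad_nonneg {p : ℕ} {S T : Matrix (Fin p) (Fin p) ℝ} (hS : S.PosSemidef)
    (hT : T.PosSemidef) (Z : Matrix (Fin p) (Fin p) ℝ) :
    0 ≤ (Zᵀ * S * Z * T).trace := by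
  obtain ⟨A, rfl⟩ := psd_eq_conjTranspose_mul_self hS
  obtain ⟨B, rfl⟩ := psd_eq_conjTranspose_mul_self hT
  have h : (Zᵀ * (Aᴴ * A) * Z * (Bᴴ * B)).trace = ((A * Z * Bᴴ)ᵀ * (A * Z * Bᴴ)).trace := by
    simp only [Matrix.conjTranspose_eq_transpose_of_trivial, Matrix.transpose_mul,
      Matrix.transpose_transpose, Matrix.mul_assoc]
    conv_rhs => rw [Matrix.trace_mul_comm]
    simp [Matrix.mul_assoc]
  rw [h]
  exact trace_tmul_nonneg _

lemma cross_sym {p : ℕ} {S T : Matrix (Fin p) (Fin p) ℝ} (hS : Sᵀ = S)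
    (hT : Tᵀ = T) (X Y : Matrix (Fin p) (Fin p) ℝ) :
    (Yᵀ * S * X * T).trace = (Xᵀ * S * Y * T).trace := by
  calc (Yᵀ * S * X * T).trace = ((Yᵀ * S * X * T)ᵀ).trace := (Matrix.trace_transpose _).symm
    _ = (Tᵀ * (Xᵀ * (Sᵀ * Y))).trace := by simp [Matrix.transpose_mul, Matrix.mul_assoc]
    _ = (Xᵀ * S * Y * T).trace := by
        rw [hS, hT, Matrix.trace_mul_comm]
        simp [Matrix.mul_assoc]

lemma convex_part {p : ℕ} (S1 S2 : Matrix (Fin p) (Fin p) ℝ) (hS1 : S1.PosSemidef)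
    (hS2 : S2.PosSemidef) :
    ConvexOn ℝ Set.univ (fun Δ : Matrix (Fin p) (Fin p) ℝ =>
        (1 / 4) * (Δᵀ * S1 * Δ * S2).trace + (1 / 4) * (Δᵀ * S2 * Δ * S1).trace
          - (Δ * (S1 - S2)).trace) := by
  have h1t : S1ᵀ = S1 := by
    simpa [Matrix.conjTranspose_eq_transpose_of_trivial] using hS1.1.eq
  have h2t : S2ᵀ = S2 := by
    simpa [Matrix.conjTranspose_eq_transpose_of_trivial] using hS2.1.eq
  refine ⟨convex_univ, fun X _ Y _ a b ha hb hab => ?_⟩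
  simp only [smul_eq_mul]
  have expand : ∀ (S T : Matrix (Fin p) (Fin p) ℝ), Sᵀ = S → Tᵀ = T →
      ((a • X + b • Y)ᵀ * S * (a • X + b • Y) * T).trace
        = a^2 * (Xᵀ * S * X * T).trace + 2*(a*b) * (Xᵀ * S * Y * T).trace
          + b^2 * (Yᵀ * S * Y * T).trace := by
    intro S T hS hT
    simp only [Matrix.transpose_add, Matrix.transpose_smul, Matrix.add_mul, Matrix.mul_add,
      Matrix.smul_mul, Matrix.mul_smul, Matrix.trace_add, Matrix.trace_smul, smul_eq_mul,
      smul_smul]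
    rw [cross_sym hS hT X Y]
    ring
  have expand2 : ∀ S T : Matrix (Fin p) (Fin p) ℝ, Sᵀ = S → Tᵀ = T →
      ((X - Y)ᵀ * S * (X - Y) * T).trace
        = (Xᵀ * S * X * T).trace - 2 * (Xᵀ * S * Y * T).trace + (Yᵀ * S * Y * T).trace := by
    intro S T hS hT
    simp only [Matrix.transpose_sub, Matrix.sub_mul, Matrix.mul_sub, Matrix.trace_sub]
    rw [cross_sym hS hT X Y]
    ring
  have lin : ((a • X + b • Y) * (S1 - S2)).trace
      = a * (X * (S1 - S2)).trace + b * (Y * (S1 - S2)).trace := by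
    simp [Matrix.add_mul, Matrix.smul_mul, Matrix.trace_add, Matrix.trace_smul]
  rw [expand S1 S2 h1t h2t, expand S2 S1 h2t h1t, lin]
  have q1 := quad_nonneg hS1 hS2 (X - Y)
  have q2 := quad_nonneg hS2 hS1 (X - Y)
  rw [expand2 S1 S2 h1t h2t] at q1
  rw [expand2 S2 S1 h2t h1t] at q2
  obtain rfl : b = 1 - a := by linarith
  nlinarith [mul_nonneg (mul_nonneg ha hb) q1, mul_nonneg (mul_nonneg ha hb) q2]

lemma lamMax_nonneg {p : ℕ} [NeZero p] {S : Matrix (Fin p) (Fin p) ℝ} (hS : S.PosSemidef) :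
    0 ≤ lamMax hS.1 := by
  have i : Fin p := ⟨0, Nat.pos_of_ne_zero (NeZero.ne p)⟩
  exact le_trans (hS.eigenvalues_nonneg i)
    (le_ciSup (Set.Finite.bddAbove (Set.finite_range _)) i)

lemma mulVec_sumsq_le {p : ℕ} [NeZero p] {S : Matrix (Fin p) (Fin p) ℝ} (hS : S.PosSemidef)
    (x : Fin p → ℝ) :
    ∑ i, (S *ᵥ x) i ^ 2 ≤ (lamMax hS.1)^2 * ∑ i, x i ^ 2 := by
  classical
  set U : Matrix (Fin p) (Fin p) ℝ := (hS.1.eigenvectorUnitary : Matrix (Fin p) (Fin p) ℝ)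
  have hU1 : star U * U = 1 := ((Matrix.mem_unitaryGroup_iff').mp (hS.1.eigenvectorUnitary).2)
  have hU2 : U * star U = 1 := ((Matrix.mem_unitaryGroup_iff).mp (hS.1.eigenvectorUnitary).2)
  have hUt : star U = Uᵀ := by
    rw [Matrix.star_eq_conjTranspose, Matrix.conjTranspose_eq_transpose_of_trivial]
  have npres : ∀ (V : Matrix (Fin p) (Fin p) ℝ), Vᵀ * V = 1 → ∀ v : Fin p → ℝ,
      ∑ i, (V *ᵥ v) i ^ 2 = ∑ i, v i ^ 2 := by
    intro V hV v
    have h1 : ∑ i, (V *ᵥ v) i ^ 2 = (V *ᵥ v) ⬝ᵥ (V *ᵥ v) := by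
      simp [dotProduct, pow_two]
    have h2 : ∑ i, v i ^ 2 = v ⬝ᵥ v := by simp [dotProduct, pow_two]
    rw [h1, h2]
    calc (V *ᵥ v) ⬝ᵥ (V *ᵥ v) = v ⬝ᵥ ((Vᵀ * V) *ᵥ v) := by
          rw [← Matrix.mulVec_mulVec, Matrix.mulVec_transpose, dotProduct_comm,
            Matrix.dotProduct_mulVec]
          exact dotProduct_comm _ _
      _ = v ⬝ᵥ v := by rw [hV, Matrix.one_mulVec]
  set f := hS.1.eigenvalues
  set y := Uᵀ *ᵥ x with hy
  have hSx : S *ᵥ x = U *ᵥ (Matrix.diagonal f *ᵥ y) := by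
    conv_lhs => rw [hS.1.spectral_theorem, Unitary.conjStarAlgAut_apply]
    rw [hUt]
    simp only [RCLike.ofReal_real_eq_id, Function.comp_def, id_eq]
    rw [← Matrix.mulVec_mulVec, ← Matrix.mulVec_mulVec]
  have hbound : ∀ i, f i ≤ lamMax hS.1 :=
    fun i => le_ciSup (Set.Finite.bddAbove (Set.finite_range _)) i
  have hf0 : ∀ i, 0 ≤ f i := hS.eigenvalues_nonneg
  calc ∑ i, (S *ᵥ x) i ^ 2 = ∑ i, (Matrix.diagonal f *ᵥ y) i ^ 2 := by
        rw [hSx, npres U (by rw [← hUt, hU1]) _]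
    _ = ∑ i, (f i)^2 * (y i)^2 := by
        simp [Matrix.mulVec_diagonal, mul_pow]
    _ ≤ ∑ i, (lamMax hS.1)^2 * (y i)^2 := by
        refine Finset.sum_le_sum fun i _ => ?_
        have := pow_le_pow_left₀ (hf0 i) (hbound i) 2
        nlinarith [sq_nonneg (y i)]
    _ = (lamMax hS.1)^2 * ∑ i, y i ^ 2 := by rw [Finset.mul_sum]
    _ = (lamMax hS.1)^2 * ∑ i, x i ^ 2 := by
        have : ∑ i, y i ^ 2 = ∑ i, x i ^ 2 := by
          rw [hy]
          have : Uᵀᵀ * Uᵀ = 1 := by rw [Matrix.transpose_transpose, ← hUt] at *; rw [hU2]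
          exact npres Uᵀ this x
        rw [this]

lemma trace_self_mul_transpose {p : ℕ} (A : Matrix (Fin p) (Fin p) ℝ) :
    (A * Aᵀ).trace = ∑ i, ∑ j, A i j ^ 2 := by
  simp [Matrix.trace, Matrix.diag_apply, Matrix.mul_apply, pow_two]

lemma frobNorm_eq_sqrt_sumsq {p : ℕ} (A : Matrix (Fin p) (Fin p) ℝ) :
    frobNorm A = Real.sqrt (∑ i, ∑ j, A i j ^ 2) := by
  rw [frobNorm, trace_self_mul_transpose]

lemma frobNorm_eq_norm {p : ℕ} (A : Matrix (Fin p) (Fin p) ℝ) : frobNorm A = ‖A‖ := by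
  rw [frobNorm_eq_sqrt_sumsq, Matrix.frobenius_norm_def, Real.sqrt_eq_rpow]
  congr 1
  refine Finset.sum_congr rfl fun i _ => Finset.sum_congr rfl fun j _ => ?_
  rw [show ((2:ℝ)) = ((2:ℕ):ℝ) by norm_num, Real.rpow_natCast]
  rw [Real.norm_eq_abs, sq_abs]

lemma frobNorm_transpose {p : ℕ} (A : Matrix (Fin p) (Fin p) ℝ) : frobNorm Aᵀ = frobNorm A := by
  rw [frobNorm, frobNorm, Matrix.transpose_transpose, Matrix.trace_mul_comm]

lemma frobNorm_mul_left_le {p : ℕ} [NeZero p] {S : Matrix (Fin p) (Fin p) ℝ}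
    (hS : S.PosSemidef) (A : Matrix (Fin p) (Fin p) ℝ) :
    frobNorm (S * A) ≤ lamMax hS.1 * frobNorm A := by
  rw [frobNorm_eq_sqrt_sumsq, frobNorm_eq_sqrt_sumsq]
  have key : ∑ i, ∑ j, (S * A) i j ^ 2 ≤ (lamMax hS.1)^2 * ∑ i, ∑ j, A i j ^ 2 := by
    rw [Finset.sum_comm]
    rw [show ∑ i, ∑ j, A i j ^2 = ∑ j, ∑ i, A i j ^ 2 from Finset.sum_comm, Finset.mul_sum]
    refine Finset.sum_le_sum fun j _ => ?_
    have := mulVec_sumsq_le hS (fun k => A k j)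
    simpa [Matrix.mul_apply, Matrix.mulVec, dotProduct] using this
  calc Real.sqrt (∑ i, ∑ j, (S * A) i j ^ 2) ≤ Real.sqrt ((lamMax hS.1)^2 * ∑ i, ∑ j, A i j ^ 2) :=
        Real.sqrt_le_sqrt key
    _ = lamMax hS.1 * Real.sqrt (∑ i, ∑ j, A i j ^ 2) := by
        rw [Real.sqrt_mul (sq_nonneg _), Real.sqrt_sq (lamMax_nonneg hS)]

lemma frobNorm_mul_right_le {p : ℕ} [NeZero p] {S : Matrix (Fin p) (Fin p) ℝ}
    (hS : S.PosSemidef) (A : Matrix (Fin p) (Fin p) ℝ) :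
    frobNorm (A * S) ≤ lamMax hS.1 * frobNorm A := by
  have hSt : Sᵀ = S := by
    simpa [Matrix.conjTranspose_eq_transpose_of_trivial] using hS.1.eq
  calc frobNorm (A * S) = frobNorm ((A * S)ᵀ) := (frobNorm_transpose _).symm
    _ = frobNorm (S * Aᵀ) := by rw [Matrix.transpose_mul, hSt]
    _ ≤ lamMax hS.1 * frobNorm Aᵀ := frobNorm_mul_left_le hS _
    _ = lamMax hS.1 * frobNorm A := by rw [frobNorm_transpose]

theorem symmetric_loss_smooth_convex_gradient_lipschitz {p : ℕ} [NeZero p]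
    (S1 S2 : Matrix (Fin p) (Fin p) ℝ) (hS1 : S1.PosSemidef) (hS2 : S2.PosSemidef) :
    ContDiff ℝ (⊤ : ℕ∞) (fun Δ : Matrix (Fin p) (Fin p) ℝ =>
        (1 / 4) * (Δᵀ * S1 * Δ * S2).trace + (1 / 4) * (Δᵀ * S2 * Δ * S1).trace
          - (Δ * (S1 - S2)).trace) ∧
    ConvexOn ℝ Set.univ (fun Δ : Matrix (Fin p) (Fin p) ℝ =>
        (1 / 4) * (Δᵀ * S1 * Δ * S2).trace + (1 / 4) * (Δᵀ * S2 * Δ * S1).trace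
          - (Δ * (S1 - S2)).trace) ∧
    ∀ Δ1 Δ2 : Matrix (Fin p) (Fin p) ℝ,
      frobNorm (((1 / 2 : ℝ) • (S1 * Δ1 * S2) + (1 / 2 : ℝ) • (S2 * Δ1 * S1) - (S1 - S2))
          - ((1 / 2 : ℝ) • (S1 * Δ2 * S2) + (1 / 2 : ℝ) • (S2 * Δ2 * S1) - (S1 - S2))) ≤
        lamMax hS1.1 * lamMax hS2.1 * frobNorm (Δ1 - Δ2) := by
  refine ⟨aux_contDiff S1 S2, convex_part S1 S2 hS1 hS2, fun Δ1 Δ2 => ?_⟩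
  set D := Δ1 - Δ2 with hD
  have hEq : ((1 / 2 : ℝ) • (S1 * Δ1 * S2) + (1 / 2 : ℝ) • (S2 * Δ1 * S1) - (S1 - S2))
          - ((1 / 2 : ℝ) • (S1 * Δ2 * S2) + (1 / 2 : ℝ) • (S2 * Δ2 * S1) - (S1 - S2))
      = (1 / 2 : ℝ) • (S1 * D * S2) + (1 / 2 : ℝ) • (S2 * D * S1) := by
    rw [hD]
    simp only [Matrix.mul_sub, Matrix.sub_mul, smul_sub]
    abel
  rw [hEq]
  have h1 : frobNorm (S1 * D * S2) ≤ lamMax hS1.1 * lamMax hS2.1 * frobNorm D := by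
    calc frobNorm (S1 * D * S2) ≤ lamMax hS2.1 * frobNorm (S1 * D) := frobNorm_mul_right_le hS2 _
      _ ≤ lamMax hS2.1 * (lamMax hS1.1 * frobNorm D) :=
          mul_le_mul_of_nonneg_left (frobNorm_mul_left_le hS1 _) (lamMax_nonneg hS2)
      _ = lamMax hS1.1 * lamMax hS2.1 * frobNorm D := by ring
  have h2 : frobNorm (S2 * D * S1) ≤ lamMax hS1.1 * lamMax hS2.1 * frobNorm D := by
    calc frobNorm (S2 * D * S1) ≤ lamMax hS1.1 * frobNorm (S2 * D) := frobNorm_mul_right_le hS1 _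
      _ ≤ lamMax hS1.1 * (lamMax hS2.1 * frobNorm D) :=
          mul_le_mul_of_nonneg_left (frobNorm_mul_left_le hS2 _) (lamMax_nonneg hS1)
      _ = lamMax hS1.1 * lamMax hS2.1 * frobNorm D := by ring
  have tri : frobNorm ((1 / 2 : ℝ) • (S1 * D * S2) + (1 / 2 : ℝ) • (S2 * D * S1))
      ≤ (1/2) * frobNorm (S1 * D * S2) + (1/2) * frobNorm (S2 * D * S1) := by
    simp only [frobNorm_eq_norm]
    calc ‖(1 / 2 : ℝ) • (S1 * D * S2) + (1 / 2 : ℝ) • (S2 * D * S1)‖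
        ≤ ‖(1 / 2 : ℝ) • (S1 * D * S2)‖ + ‖(1 / 2 : ℝ) • (S2 * D * S1)‖ := norm_add_le _ _
      _ = (1/2) * ‖S1 * D * S2‖ + (1/2) * ‖S2 * D * S1‖ := by
          rw [norm_smul, norm_smul]; norm_num
  linarith
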